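/- (Orthogonality propagation with carrier reordering) Let L ≥ 0, ρ > 0, and let a_1, …, a_N ∈ ℂ^{L+1} be pairwise orthogonal vectors with ‖a_j‖² = L+1 for all j. Let X ∈ ℂ^N, set P_0 = I_{L+1}, and for 1 ≤ i ≤ N define recursively γ(i) = 1 / (1 + ρ |X_i|² · a_i^H P_{i−1} a_i) and P_i = P_{i−1} − ρ · γ(i) · |X_i|² · P_{i−1} a_i a_i^H P_{i−1}. Then for all 1 ≤ i ≤ N: γ(i) = 1 / (1 + ρ |X_i|² (L+1)), and for every k with i < k ≤ N one has P_i a_k = a_k. -/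

import Mathlib

/-!
Each update `P ↦ P - c • P a_i a_iᴴ P` fixes every vector `v` that `P` already fixes and
that is orthogonal to `a_i`, since then `P a_i a_iᴴ P v = P a_i (a_iᴴ v) = 0`. By induction
`P_i` fixes all `a_k` with `i ≤ k`; in particular
`a_iᴴ P_{i-1} a_i = ‖a_i‖² = L + 1`, which gives `γ(i)`.
-/

open Matrix

namespace Matrix

variable {n R : Type*} [Fintype n] [Ring R]

theorem sub_smul_mul_vecMulVec_mul_mulVec_eq_self (P : Matrix n n R) (c : R) (u w v : n → R)
    (hPv : P *ᵥ v = v) (hwv : w ⬝ᵥ v = 0) :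
    (P - c • (P * vecMulVec u w * P)) *ᵥ v = v := by
  rw [sub_mulVec, smul_mulVec, ← mulVec_mulVec, hPv, ← mulVec_mulVec, vecMulVec_mulVec, hwv]
  simp

theorem mulVec_eq_self_of_rankOne_updates [DecidableEq n] {N : ℕ} (P : ℕ → Matrix n n R)
    (hP0 : P 0 = 1) (a w : Fin N → n → R) (c : Fin N → R)
    (horth : ∀ j k : Fin N, j ≠ k → w j ⬝ᵥ a k = 0)
    (hPrec : ∀ i : Fin N,
      P ((i : ℕ) + 1) = P i - c i • (P i * vecMulVec (a i) (w i) * P i)) :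
    ∀ (i : ℕ) (k : Fin N), i ≤ k → P i *ᵥ a k = a k := by
  intro i
  induction i with
  | zero => simp [hP0]
  | succ i ih =>
    intro k hk
    have hik : i < k := hk
    rw [hPrec ⟨i, hik.trans k.isLt⟩]
    exact sub_smul_mul_vecMulVec_mul_mulVec_eq_self _ _ _ _ _ (ih k hik.le)
      (horth _ _ (Fin.ne_of_lt hik))

end Matrix

theorem stmt13_general {L N : ℕ} (ρ : ℝ)
    (a : Fin N → (Fin (L + 1) → ℂ))
    (horth : ∀ j k : Fin N, j ≠ k → star (a j) ⬝ᵥ a k = 0)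
    (hnorm : ∀ j : Fin N, star (a j) ⬝ᵥ a j = ((L : ℂ) + 1))
    (X : Fin N → ℂ)
    (P : ℕ → Matrix (Fin (L + 1)) (Fin (L + 1)) ℂ) (hP0 : P 0 = 1)
    (γ : ℕ → ℝ)
    (hγ : ∀ i : Fin N, γ ((i : ℕ) + 1) =
      1 / (1 + ρ * ‖X i‖ ^ 2 * (star (a i) ⬝ᵥ (P (i : ℕ) *ᵥ a i)).re))
    (hPrec : ∀ i : Fin N, P ((i : ℕ) + 1) = P (i : ℕ) -
      ((ρ * γ ((i : ℕ) + 1) * ‖X i‖ ^ 2 : ℝ) : ℂ) •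
        (P (i : ℕ) * vecMulVec (a i) (star (a i)) * P (i : ℕ))) :
    ∀ i : Fin N,
      γ ((i : ℕ) + 1) = 1 / (1 + ρ * ‖X i‖ ^ 2 * ((L : ℝ) + 1)) ∧
      ∀ k : Fin N, (i : ℕ) < (k : ℕ) → P ((i : ℕ) + 1) *ᵥ a k = a k := by
  have hfix := mulVec_eq_self_of_rankOne_updates P hP0 a (fun j => star (a j)) _ horth hPrec
  intro i
  refine ⟨?_, fun k hk => hfix _ k hk⟩
  rw [hγ i, hfix i i le_rfl, hnorm i]
  norm_num

/-- Orthogonality propagation with carrier reordering: if the vectors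
`a_1, …, a_N ∈ ℂ^{L+1}` are pairwise orthogonal with `‖a_j‖² = L+1`, `P_0 = I`, and
`γ(i) = 1/(1 + ρ|X_i|² a_iᴴ P_{i−1} a_i)`,
`P_i = P_{i−1} − ρ γ(i) |X_i|² P_{i−1} a_i a_iᴴ P_{i−1}` for `1 ≤ i ≤ N`, then
`γ(i) = 1/(1 + ρ|X_i|²(L+1))` for all `1 ≤ i ≤ N`, and `P_i a_k = a_k` whenever
`i < k ≤ N`. -/
theorem stmt13 {L N : ℕ} (ρ : ℝ) (hρ : 0 < ρ)
    (a : Fin N → (Fin (L + 1) → ℂ))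
    (horth : ∀ j k : Fin N, j ≠ k → star (a j) ⬝ᵥ a k = 0)
    (hnorm : ∀ j : Fin N, star (a j) ⬝ᵥ a j = ((L : ℂ) + 1))
    (X : Fin N → ℂ)
    (P : ℕ → Matrix (Fin (L + 1)) (Fin (L + 1)) ℂ) (hP0 : P 0 = 1)
    (γ : ℕ → ℝ)
    (hγ : ∀ i : Fin N, γ ((i : ℕ) + 1) =
      1 / (1 + ρ * ‖X i‖ ^ 2 * (star (a i) ⬝ᵥ (P (i : ℕ) *ᵥ a i)).re))
    (hPrec : ∀ i : Fin N, P ((i : ℕ) + 1) = P (i : ℕ) -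
      ((ρ * γ ((i : ℕ) + 1) * ‖X i‖ ^ 2 : ℝ) : ℂ) •
        (P (i : ℕ) * vecMulVec (a i) (star (a i)) * P (i : ℕ))) :
    ∀ i : Fin N,
      γ ((i : ℕ) + 1) = 1 / (1 + ρ * ‖X i‖ ^ 2 * ((L : ℝ) + 1)) ∧
      ∀ k : Fin N, (i : ℕ) < (k : ℕ) → P ((i : ℕ) + 1) *ᵥ a k = a k :=
  stmt13_general ρ a horth hnorm X P hP0 γ hγ hPrec
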